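/- Given a semi-component module S over a finite poset P with a chosen semi-component basis, its component extension C (obtained by adding one dimension to every S(p) and extending each matrix by a new first row and column: the new column is (1,0,...,0)ᵀ, and the new first row has 1 in each column of the original matrix that was zero, 0 otherwise) is a component module, and C is isomorphic to S ⊕ I where I is the interval module supported on all of P. -/

import Mathlib

section

variable {K : Type*} [Field K]

/-- A matrix is a component matrix if all entries are `0` or `1` and every
column contains exactly one `1`. -/
def IsComponentMatrix {ι κ : Type*} (A : Matrix ι κ K) : Prop :=
  (∀ i j, A i j = 0 ∨ A i j = 1) ∧ ∀ j, ∃! i, A i j = 1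

/-- A matrix is a semi-component matrix if all entries are `0` or `1` and every
column contains at most one `1`. -/
def IsSemiComponentMatrix {ι κ : Type*} (A : Matrix ι κ K) : Prop :=
  (∀ i j, A i j = 0 ∨ A i j = 1) ∧ ∀ j i i', A i j = 1 → A i' j = 1 → i = i'

open Classical in
/-- The component extension of a matrix: add a new first row and first column;
the new column is `(1,0,…,0)ᵀ`, and the new first row has a `1` exactly in the
columns of the original matrix that were zero. -/
noncomputable def extendMatrix {m n : ℕ} (A : Matrix (Fin m) (Fin n) K) :
    Matrix (Fin (m + 1)) (Fin (n + 1)) K :=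
  Matrix.of fun i j =>
    Fin.cases
      (Fin.cases (1 : K) (fun j' => if ∀ i', A i' j' = 0 then 1 else 0) j)
      (fun i' => Fin.cases (0 : K) (fun j' => A i' j') j) i

end

/-!
Read column by column, a semi-component matrix sends each basis vector either to zero or to
a basis vector. The component extension sends the basis vectors that were killed to the new
basis vector `0` instead, so every column of an extended matrix becomes a standard basis
vector. A component matrix preserves the sum of coordinates, which is why
`v ↦ (Fin.tail v, ∑ i, v i)` splits the component extension as `S ⊕ I`.
-/

section

open scoped Matrix

variable {K : Type*} [Field K]

theorem isComponentMatrix_iff {ι κ : Type*} [DecidableEq ι] {M : Matrix ι κ K} :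
    IsComponentMatrix M ↔ ∀ j, ∃ k, ∀ i, M i j = (Pi.single k 1 : _ → K) i := by
  constructor
  · rintro ⟨hentry, hunique⟩ j
    obtain ⟨k, hk, hk_unique⟩ := hunique j
    refine ⟨k, fun i => ?_⟩
    rcases eq_or_ne i k with rfl | hik
    · simp [hk]
    · rw [Pi.single_eq_of_ne hik]
      exact (hentry i j).resolve_right fun hi => hik (hk_unique i hi)
  · intro hcol
    refine ⟨fun i j => ?_, fun j => ?_⟩
    · obtain ⟨k, hk⟩ := hcol j
      rw [hk, Pi.single_apply]
      split_ifs <;> simp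
    · obtain ⟨k, hk⟩ := hcol j
      refine ⟨k, by simp [hk], fun i hi => ?_⟩
      by_contra hik
      simp [hk, Pi.single_eq_of_ne hik] at hi

theorem IsSemiComponentMatrix.col_eq_zero_or_single {ι κ : Type*} [DecidableEq ι]
    {A : Matrix ι κ K} (hA : IsSemiComponentMatrix A) (j : κ) :
    (∀ i, A i j = 0) ∨ ∃ k, ∀ i, A i j = (Pi.single k 1 : _ → K) i := by
  by_cases hzero : ∀ i, A i j = 0
  · exact Or.inl hzero
  · push Not at hzero
    obtain ⟨k, hk⟩ := hzero
    have hk_one : A k j = 1 := (hA.1 k j).resolve_left hk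
    refine Or.inr ⟨k, fun i => ?_⟩
    rcases eq_or_ne i k with rfl | hik
    · simp [hk_one]
    · rw [Pi.single_eq_of_ne hik]
      exact (hA.1 i j).resolve_right fun hi => hik (hA.2 j i k hi hk_one)

theorem IsComponentMatrix.sum_col {ι κ : Type*} [Fintype ι] {M : Matrix ι κ K}
    (hM : IsComponentMatrix M) (j : κ) : ∑ i, M i j = 1 := by
  classical
  obtain ⟨k, hk⟩ := isComponentMatrix_iff.mp hM j
  simp [hk]

theorem IsComponentMatrix.sum_mulVec {ι κ : Type*} [Fintype ι] [Fintype κ] {M : Matrix ι κ K}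
    (hM : IsComponentMatrix M) (v : κ → K) : ∑ i, (M *ᵥ v) i = ∑ j, v j := by
  simp only [Matrix.mulVec, dotProduct]
  rw [Finset.sum_comm]
  simp [← Finset.sum_mul, hM.sum_col]

variable (K) in
noncomputable def tailSumEquiv (n : ℕ) : (Fin (n + 1) → K) ≃ₗ[K] (Fin n → K) × K where
  toFun v := (Fin.tail v, ∑ i, v i)
  map_add' u v := by ext <;> simp [Fin.tail, Finset.sum_add_distrib]
  map_smul' c v := by ext <;> simp [Fin.tail, Finset.mul_sum]
  invFun w := Fin.cons (w.2 - ∑ i, w.1 i) w.1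
  left_inv v := by
    funext i
    cases i using Fin.cases <;> simp [Fin.sum_univ_succ, Fin.tail]
  right_inv w := by ext <;> simp [Fin.sum_univ_succ]

variable {m n : ℕ} (A : Matrix (Fin m) (Fin n) K)

@[simp] theorem extendMatrix_zero_zero : extendMatrix A 0 0 = 1 := by
  simp [extendMatrix]

open Classical in
@[simp] theorem extendMatrix_zero_succ (j : Fin n) :
    extendMatrix A 0 j.succ = if ∀ i, A i j = 0 then 1 else 0 := by
  simp [extendMatrix]

@[simp] theorem extendMatrix_succ_zero (i : Fin m) : extendMatrix A i.succ 0 = 0 := by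
  simp [extendMatrix]

@[simp] theorem extendMatrix_succ_succ (i : Fin m) (j : Fin n) :
    extendMatrix A i.succ j.succ = A i j := by
  simp [extendMatrix]

theorem IsSemiComponentMatrix.isComponentMatrix_extendMatrix {A : Matrix (Fin m) (Fin n) K}
    (hA : IsSemiComponentMatrix A) : IsComponentMatrix (extendMatrix A) := by
  classical
  refine isComponentMatrix_iff.mpr fun j => ?_
  cases j using Fin.cases with
  | zero => exact ⟨0, fun i => by cases i using Fin.cases <;> simp⟩
  | succ j =>
    rcases hA.col_eq_zero_or_single j with hzero | ⟨k, hk⟩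
    · exact ⟨0, fun i => by cases i using Fin.cases <;> simp [hzero]⟩
    · exact ⟨k.succ, fun i => by cases i using Fin.cases <;> simp [hk, Pi.single_apply]⟩

theorem extendMatrix_one : extendMatrix (1 : Matrix (Fin m) (Fin m) K) = 1 := by
  classical
  ext i j
  cases i using Fin.cases <;> cases j using Fin.cases <;>
    simp [Matrix.one_apply, (Fin.succ_ne_zero _).symm]

theorem extendMatrix_mul {l : ℕ} (B : Matrix (Fin l) (Fin m) K) {A : Matrix (Fin m) (Fin n) K}
    (hA : IsSemiComponentMatrix A) :
    extendMatrix B * extendMatrix A = extendMatrix (B * A) := by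
  classical
  ext i j
  rw [Matrix.mul_apply, Fin.sum_univ_succ]
  cases i using Fin.cases <;> cases j using Fin.cases
  case zero.succ j =>
    rcases hA.col_eq_zero_or_single j with hzero | ⟨k, hk⟩
    · simp [hzero, Matrix.mul_apply]
    · have hBA (i : Fin l) : (B * A) i j = B i k := by
        simp [Matrix.mul_apply, hk, Pi.single_apply]
      simp [hk, hBA, Pi.single_apply]
  all_goals simp [Matrix.mul_apply]

theorem tail_extendMatrix_mulVec (v : Fin (n + 1) → K) :
    Fin.tail (extendMatrix A *ᵥ v) = A *ᵥ Fin.tail v := by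
  funext i
  simp [Fin.tail, Matrix.mulVec, dotProduct, Fin.sum_univ_succ]

theorem tailSumEquiv_extendMatrix_mulVec {A : Matrix (Fin m) (Fin n) K}
    (hA : IsSemiComponentMatrix A) (v : Fin (n + 1) → K) :
    tailSumEquiv K m (extendMatrix A *ᵥ v) =
      (A *ᵥ (tailSumEquiv K n v).1, (tailSumEquiv K n v).2) :=
  Prod.ext (tail_extendMatrix_mulVec A v) (hA.isComponentMatrix_extendMatrix.sum_mulVec v)

end

theorem stmt_17_general (K : Type*) [Field K] (P : Type*) [PartialOrder P]
    (d : P → ℕ) (A : ∀ p q : P, p ≤ q → Matrix (Fin (d q)) (Fin (d p)) K)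
    (hid : ∀ p : P, A p p le_rfl = 1)
    (hcomp : ∀ (p q r : P) (hpq : p ≤ q) (hqr : q ≤ r),
      A q r hqr * A p q hpq = A p r (hpq.trans hqr))
    (hsemi : ∀ (p q : P) (h : p ≤ q), IsSemiComponentMatrix (A p q h)) :
    -- the extension is functorial
    (∀ p : P, extendMatrix (A p p le_rfl) = 1) ∧
    (∀ (p q r : P) (hpq : p ≤ q) (hqr : q ≤ r),
      extendMatrix (A q r hqr) * extendMatrix (A p q hpq) =
        extendMatrix (A p r (hpq.trans hqr))) ∧
    -- the extension is a component module
    (∀ (p q : P) (h : p ≤ q), IsComponentMatrix (extendMatrix (A p q h))) ∧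
    -- the extension is isomorphic to `S ⊕ I`
    (∃ e : ∀ p : P, (Fin (d p + 1) → K) ≃ₗ[K] ((Fin (d p) → K) × K),
      ∀ (p q : P) (h : p ≤ q) (v : Fin (d p + 1) → K),
        e q ((extendMatrix (A p q h)).mulVec v) =
          ((A p q h).mulVec (e p v).1, (e p v).2)) :=
  ⟨fun p => by rw [hid, extendMatrix_one],
    fun p q r hpq hqr => by rw [extendMatrix_mul _ (hsemi p q hpq), hcomp],
    fun p q h => (hsemi p q h).isComponentMatrix_extendMatrix,
    fun p => tailSumEquiv K (d p),
    fun p q h v => tailSumEquiv_extendMatrix_mulVec (hsemi p q h) v⟩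

/-- Given a semi-component module `S` over a finite poset `P` (structure maps
given by semi-component matrices `A`), its component extension `C` (with
structure maps the extended matrices) is a component module, is functorial, and
is isomorphic to `S ⊕ I`, where `I` is the interval module supported on all of
`P` (the summand `K` with identity maps). -/
theorem stmt_17 (K : Type*) [Field K] (P : Type*) [PartialOrder P] [Fintype P]
    (d : P → ℕ) (A : ∀ p q : P, p ≤ q → Matrix (Fin (d q)) (Fin (d p)) K)
    (hid : ∀ p : P, A p p le_rfl = 1)
    (hcomp : ∀ (p q r : P) (hpq : p ≤ q) (hqr : q ≤ r),
      A q r hqr * A p q hpq = A p r (hpq.trans hqr))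
    (hsemi : ∀ (p q : P) (h : p ≤ q), IsSemiComponentMatrix (A p q h)) :
    -- the extension is functorial
    (∀ p : P, extendMatrix (A p p le_rfl) = 1) ∧
    (∀ (p q r : P) (hpq : p ≤ q) (hqr : q ≤ r),
      extendMatrix (A q r hqr) * extendMatrix (A p q hpq) =
        extendMatrix (A p r (hpq.trans hqr))) ∧
    -- the extension is a component module
    (∀ (p q : P) (h : p ≤ q), IsComponentMatrix (extendMatrix (A p q h))) ∧
    -- the extension is isomorphic to `S ⊕ I`
    (∃ e : ∀ p : P, (Fin (d p + 1) → K) ≃ₗ[K] ((Fin (d p) → K) × K),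
      ∀ (p q : P) (h : p ≤ q) (v : Fin (d p + 1) → K),
        e q ((extendMatrix (A p q h)).mulVec v) =
          ((A p q h).mulVec (e p v).1, (e p v).2)) :=
  stmt_17_general K P d A hid hcomp hsemi
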